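/- Let R be a Γ-graded ring and (M, ℳ) a graded R-module. Then the ring E₀(M) is unit-regular — i.e., for every f ∈ E₀(M) there exist u, w ∈ E₀(M) with u*w = 1, w*u = 1 and f*u*f = f — if and only if E₀(M) is von Neumann regular (for every f ∈ E₀(M) there is g ∈ E₀(M) with f*g*f = f) and M satisfies graded internal cancellation: whenever B, C, D, E are graded submodules of M with IsCompl B C and IsCompl D E, and B is graded-isomorphic to D, then C is graded-isomorphic to E. -/

import Mathlib

/-- The degree-zero component `E₀(M)` of the graded endomorphism ring of a graded module:
the subring of `Module.End R M` of endomorphisms preserving every homogeneous component. -/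
def gradedEndZero {Γ : Type*} [AddGroup Γ] (R : Type*) [Ring R]
    {M : Type*} [AddCommGroup M] [Module R M]
    (ℳ : Γ → AddSubgroup M) : Subring (Module.End R M) where
  carrier := {f | ∀ γ : Γ, ∀ m ∈ ℳ γ, f m ∈ ℳ γ}
  zero_mem' := fun γ _ _ => (ℳ γ).zero_mem
  one_mem' := fun _ _ hm => hm
  add_mem' := fun hf hg γ m hm => (ℳ γ).add_mem (hf γ m hm) (hg γ m hm)
  neg_mem' := fun hf γ m hm => (ℳ γ).neg_mem (hf γ m hm)
  mul_mem' := fun hf hg γ m hm => hf γ _ (hg γ m hm)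

/-- A submodule `P` of a graded module `(M, ℳ)` is a graded submodule if every homogeneous
component of every element of `P` lies in `P`. -/
def IsGradedSubmodule {Γ : Type*} [AddGroup Γ] [DecidableEq Γ]
    {R N : Type*} [Ring R] [AddCommGroup N] [Module R N]
    (𝒩 : Γ → AddSubgroup N) [DirectSum.Decomposition 𝒩] (P : Submodule R N) : Prop :=
  ∀ x ∈ P, ∀ γ : Γ, ((DirectSum.decompose 𝒩 x γ : N) ∈ P)

/-- Two submodules `P, Q` of a graded module `(M, ℳ)` are graded-isomorphic if there is an
`R`-linear equivalence between them respecting degrees. -/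
def GradedSubmoduleIso {Γ : Type*} [AddGroup Γ]
    {R M : Type*} [Ring R] [AddCommGroup M] [Module R M]
    (ℳ : Γ → AddSubgroup M) (P Q : Submodule R M) : Prop :=
  ∃ e : P ≃ₗ[R] Q, ∀ γ : Γ, ∀ x : P, ((x : M) ∈ ℳ γ ↔ (e x : M) ∈ ℳ γ)

set_option linter.unusedSectionVars false
set_option linter.unusedVariables false
set_option maxHeartbeats 1000000

section Helpers

variable {Γ R M : Type*} [AddGroup Γ] [DecidableEq Γ] [Ring R]
  [AddCommGroup M] [Module R M] (ℳ : Γ → AddSubgroup M) [DirectSum.Decomposition ℳ]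

lemma aux_decompose_map (f : M →ₗ[R] M) (hf : ∀ γ : Γ, ∀ m ∈ ℳ γ, f m ∈ ℳ γ)
    (x : M) (γ : Γ) :
    (DirectSum.decompose ℳ (f x) γ : M) = f (DirectSum.decompose ℳ x γ) := by
  induction x using DirectSum.Decomposition.inductionOn ℳ with
  | zero => simp
  | @homogeneous δ m =>
    rcases eq_or_ne δ γ with rfl | h
    · rw [DirectSum.decompose_of_mem_same ℳ (hf δ m m.2),
        DirectSum.decompose_of_mem_same ℳ m.2]
    · rw [DirectSum.decompose_of_mem_ne ℳ (hf δ m m.2) h,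
        DirectSum.decompose_of_mem_ne ℳ m.2 h, map_zero]
  | add x y hx hy =>
    rw [map_add, DirectSum.decompose_add, DirectSum.add_apply, AddSubgroup.coe_add,
      hx, hy, DirectSum.decompose_add, DirectSum.add_apply, AddSubgroup.coe_add, map_add]

lemma aux_ker_graded (f : M →ₗ[R] M) (hf : ∀ γ : Γ, ∀ m ∈ ℳ γ, f m ∈ ℳ γ) :
    IsGradedSubmodule ℳ (LinearMap.ker f) := by
  intro x hx γ
  rw [LinearMap.mem_ker, ← aux_decompose_map ℳ f hf, LinearMap.mem_ker.1 hx]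
  simp

lemma aux_range_graded (f : M →ₗ[R] M) (hf : ∀ γ : Γ, ∀ m ∈ ℳ γ, f m ∈ ℳ γ) :
    IsGradedSubmodule ℳ (LinearMap.range f) := by
  rintro x ⟨y, rfl⟩ γ
  rw [aux_decompose_map ℳ f hf]
  exact ⟨_, rfl⟩

lemma aux_mem_of_add {B C : Submodule R M} (hB : IsGradedSubmodule ℳ B)
    (hC : IsGradedSubmodule ℳ C) (h : IsCompl B C) {γ : Γ} {m b c : M} (hm : m ∈ ℳ γ)
    (hb : b ∈ B) (hc : c ∈ C) (hbc : b + c = m) : b ∈ ℳ γ := by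
  have h1 : (DirectSum.decompose ℳ b γ : M) ∈ B := hB b hb γ
  have h2 : (DirectSum.decompose ℳ c γ : M) ∈ C := hC c hc γ
  have hsum : (DirectSum.decompose ℳ b γ : M) + (DirectSum.decompose ℳ c γ : M) = m := by
    rw [← AddSubgroup.coe_add, ← DirectSum.add_apply, ← DirectSum.decompose_add, hbc,
      DirectSum.decompose_of_mem_same ℳ hm]
  have key : b - (DirectSum.decompose ℳ b γ : M) = 0 := by
    have hmem : b - (DirectSum.decompose ℳ b γ : M) ∈ B ⊓ C := by
      constructor
      · exact Submodule.sub_mem B hb h1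
      · have heq : b - (DirectSum.decompose ℳ b γ : M)
            = (DirectSum.decompose ℳ c γ : M) - c := by
          have := hsum.trans hbc.symm
          rw [sub_eq_sub_iff_add_eq_add, ← this, add_comm]
        rw [heq]
        exact Submodule.sub_mem C h2 hc
    rwa [h.inf_eq_bot, Submodule.mem_bot] at hmem
  rw [show b = (DirectSum.decompose ℳ b γ : M) from sub_eq_zero.1 key]
  exact SetLike.coe_mem _

lemma aux_proj_mem {B C : Submodule R M} (hB : IsGradedSubmodule ℳ B)
    (hC : IsGradedSubmodule ℳ C) (h : IsCompl B C) {γ : Γ} {m : M} (hm : m ∈ ℳ γ) :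
    ((B.projectionOnto C h m : M) ∈ ℳ γ) := by
  refine aux_mem_of_add ℳ hB hC h hm (SetLike.coe_mem _)
    (SetLike.coe_mem (C.projectionOnto B h.symm m)) ?_
  exact Submodule.projection_add_projection_eq_self h m

lemma aux_compl_iso {D K E : Submodule R M} (hD : IsGradedSubmodule ℳ D)
    (hK : IsGradedSubmodule ℳ K) (hE : IsGradedSubmodule ℳ E)
    (hDK : IsCompl D K) (hDE : IsCompl D E) :
    ∃ e : K ≃ₗ[R] E, ∀ γ : Γ, ∀ x : K, ((x : M) ∈ ℳ γ ↔ (e x : M) ∈ ℳ γ) := by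
  set πE := E.projectionOnto D hDE.symm
  set πK := K.projectionOnto D hDK.symm
  have keyE : ∀ x : M, πE ((πK x : M)) = πE x := by
    intro x
    have hx : (πK x : M) = x - (D.projectionOnto K hDK x : M) := by
      rw [eq_sub_iff_add_eq, add_comm]
      exact Submodule.projection_add_projection_eq_self hDK x
    rw [hx, map_sub,
      Submodule.projectionOnto_apply_of_mem_right hDE.symm (SetLike.coe_mem _), sub_zero]
  have keyK : ∀ x : M, πK ((πE x : M)) = πK x := by
    intro x
    have hx : (πE x : M) = x - (D.projectionOnto E hDE x : M) := by
      rw [eq_sub_iff_add_eq, add_comm]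
      exact Submodule.projection_add_projection_eq_self hDE x
    rw [hx, map_sub,
      Submodule.projectionOnto_apply_of_mem_right hDK.symm (SetLike.coe_mem _), sub_zero]
  refine ⟨LinearEquiv.ofLinear (πE ∘ₗ K.subtype) (πK ∘ₗ E.subtype) ?_ ?_, ?_⟩
  · ext x
    simp only [LinearMap.coe_comp, Function.comp_apply, Submodule.coe_subtype,
      LinearMap.id_coe, id_eq]
    rw [keyE, Submodule.projectionOnto_apply_left]
  · ext x
    simp only [LinearMap.coe_comp, Function.comp_apply, Submodule.coe_subtype,
      LinearMap.id_coe, id_eq]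
    rw [keyK, Submodule.projectionOnto_apply_left]
  · intro γ x
    simp only [LinearEquiv.ofLinear_apply, LinearMap.coe_comp, Function.comp_apply,
      Submodule.coe_subtype]
    constructor
    · intro hx
      exact aux_proj_mem ℳ hE hD hDE.symm hx
    · intro hx
      have := aux_proj_mem ℳ hK hD hDK.symm hx
      rwa [keyK, Submodule.projectionOnto_apply_left] at this

end Helpers

/-- For a `Γ`-graded ring `R` and a graded `R`-module `(M, ℳ)`, the ring `E₀(M)` is
unit-regular iff `E₀(M)` is von Neumann regular and `M` satisfies graded internal
cancellation. -/
theorem gradedEndZero_unitRegular_iff_regular_and_graded_internal_cancellation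
    {Γ R M : Type*} [AddGroup Γ] [DecidableEq Γ] [Ring R]
    (𝒜 : Γ → AddSubgroup R) [GradedRing 𝒜]
    [AddCommGroup M] [Module R M] (ℳ : Γ → AddSubgroup M) [DirectSum.Decomposition ℳ]
    (hM : ∀ γ δ : Γ, ∀ r ∈ 𝒜 γ, ∀ m ∈ ℳ δ, r • m ∈ ℳ (γ + δ)) :
    (∀ f : gradedEndZero R ℳ, ∃ u w : gradedEndZero R ℳ,
      u * w = 1 ∧ w * u = 1 ∧ f * u * f = f) ↔
    ((∀ f : gradedEndZero R ℳ, ∃ g : gradedEndZero R ℳ, f * g * f = f) ∧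
      ∀ B C D E : Submodule R M,
        IsGradedSubmodule ℳ B → IsGradedSubmodule ℳ C →
        IsGradedSubmodule ℳ D → IsGradedSubmodule ℳ E →
        IsCompl B C → IsCompl D E →
        GradedSubmoduleIso ℳ B D → GradedSubmoduleIso ℳ C E) := by
  constructor
  · intro hUR
    constructor
    · intro f
      obtain ⟨u, w, _, _, h3⟩ := hUR f
      exact ⟨u, h3⟩
    · intro B C D E hB hC hD hE hBC hDE hBD
      obtain ⟨e₀, he₀⟩ := hBD
      set πB := B.projectionOnto C hBC with hπB
      set F : Module.End R M := D.subtype ∘ₗ (e₀ : B →ₗ[R] D) ∘ₗ πB with hF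
      have hFapp : ∀ m : M, F m = ((e₀ (πB m) : D) : M) := fun m => rfl
      have hFmem : F ∈ gradedEndZero R ℳ := by
        intro γ m hm
        rw [hFapp]
        exact (he₀ γ (πB m)).1 (aux_proj_mem ℳ hB hC hBC hm)
      obtain ⟨u, w, huw, hwu, hfuf⟩ := hUR ⟨F, hFmem⟩
      set U : Module.End R M := (u : Module.End R M) with hU
      set W : Module.End R M := (w : Module.End R M) with hW
      have hUW : U * W = 1 := congrArg Subtype.val huw
      have hWU : W * U = 1 := congrArg Subtype.val hwu
      have hFUF : F * U * F = F := congrArg Subtype.val hfuf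
      have hFb : ∀ b : B, F (b : M) = ((e₀ b : D) : M) := by
        intro b
        rw [hFapp, hπB, Submodule.projectionOnto_apply_left]
      have hrange : LinearMap.range F = D := by
        apply le_antisymm
        · rintro _ ⟨x, rfl⟩
          rw [hFapp]
          exact SetLike.coe_mem _
        · intro d hd
          exact ⟨(e₀.symm ⟨d, hd⟩ : M), by rw [hFb, e₀.apply_symm_apply]⟩
      have hker : LinearMap.ker F = C := by
        ext x
        rw [LinearMap.mem_ker, hFapp]
        rw [ZeroMemClass.coe_eq_zero, LinearEquiv.map_eq_zero_iff,
          Submodule.projectionOnto_apply_eq_zero_iff]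
      have hPidem : (F * U) * (F * U) = F * U := by rw [← mul_assoc, hFUF]
      set K := LinearMap.ker (F * U) with hK
      have hFUmem : ∀ γ : Γ, ∀ m ∈ ℳ γ, (F * U) m ∈ ℳ γ := by
        intro γ m hm
        exact hFmem γ _ (u.2 γ m hm)
      have hKgraded : IsGradedSubmodule ℳ K := aux_ker_graded ℳ (F * U) hFUmem
      have hrangeP : LinearMap.range (F * U) = D := by
        apply le_antisymm
        · rintro _ ⟨x, rfl⟩
          rw [← hrange]
          exact ⟨U x, rfl⟩
        · intro d hd
          rw [← hrange] at hd
          obtain ⟨x, rfl⟩ := hd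
          exact ⟨F x, DFunLike.congr_fun hFUF x⟩
      have hcomplDK : IsCompl D K := by
        have hproj : LinearMap.IsProj D (F * U) := by
          constructor
          · intro x
            rw [← hrangeP]
            exact LinearMap.mem_range_self _ x
          · intro x hx
            rw [← hrangeP] at hx
            obtain ⟨y, rfl⟩ := hx
            exact DFunLike.congr_fun hPidem y
        exact hproj.isCompl
      -- C ≃ K via W
      have hWC : ∀ x ∈ C, W x ∈ K := by
        intro x hx
        rw [hK, LinearMap.mem_ker]
        have : (F * U) (W x) = F ((U * W) x) := rfl
        rw [this, hUW]
        rw [← hker] at hx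
        exact hx
      have hUK : ∀ x ∈ K, U x ∈ C := by
        intro x hx
        rw [← hker, LinearMap.mem_ker]
        exact hx
      have hcomp1 : (W.restrict hWC) ∘ₗ (U.restrict hUK) = LinearMap.id := by
        ext x
        simp only [LinearMap.coe_comp, Function.comp_apply, LinearMap.restrict_coe_apply,
            LinearMap.id_coe, id_eq]
        exact DFunLike.congr_fun hWU (x : M)
      have hcomp2 : (U.restrict hUK) ∘ₗ (W.restrict hWC) = LinearMap.id := by
        ext x
        simp only [LinearMap.coe_comp, Function.comp_apply, LinearMap.restrict_coe_apply,
            LinearMap.id_coe, id_eq]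
        exact DFunLike.congr_fun hUW (x : M)
      set eCK : C ≃ₗ[R] K := LinearEquiv.ofLinear (W.restrict hWC) (U.restrict hUK)
        hcomp1 hcomp2 with heCK
      have hiffCK : ∀ γ : Γ, ∀ x : C, ((x : M) ∈ ℳ γ ↔ ((eCK x : K) : M) ∈ ℳ γ) := by
        intro γ x
        have hval : ((eCK x : K) : M) = W (x : M) := rfl
        rw [hval]
        constructor
        · intro hx
          exact w.2 γ _ hx
        · intro hx
          have h1 := u.2 γ _ hx
          have h2 : U (W (x : M)) = (x : M) := DFunLike.congr_fun hUW (x : M)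
          rwa [h2] at h1
      obtain ⟨eKE, hiffKE⟩ := aux_compl_iso ℳ hD hKgraded hE hcomplDK hDE
      exact ⟨eCK.trans eKE, fun γ x => (hiffCK γ x).trans (hiffKE γ (eCK x))⟩
  · rintro ⟨hreg, hcancel⟩ f
    obtain ⟨g, hfgf⟩ := hreg f
    set F : Module.End R M := (f : Module.End R M) with hFdef
    set G : Module.End R M := (g : Module.End R M) with hGdef
    have hFGF : F * G * F = F := congrArg Subtype.val hfgf
    set Q : Module.End R M := G * F with hQdef
    set P : Module.End R M := F * G with hPdef
    have hQidem : Q * Q = Q := by rw [hQdef, mul_assoc, ← mul_assoc F G F, hFGF]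
    have hPidem : P * P = P := by rw [hPdef, ← mul_assoc, hFGF]
    have hQm : ∀ γ : Γ, ∀ m ∈ ℳ γ, Q m ∈ ℳ γ := fun γ m hm => g.2 γ _ (f.2 γ m hm)
    have hPm : ∀ γ : Γ, ∀ m ∈ ℳ γ, P m ∈ ℳ γ := fun γ m hm => f.2 γ _ (g.2 γ m hm)
    set B := LinearMap.range Q with hBdef
    set C := LinearMap.ker Q with hCdef
    set D := LinearMap.range P with hDdef
    set E := LinearMap.ker P with hEdef
    have hB : IsGradedSubmodule ℳ B := aux_range_graded ℳ Q hQm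
    have hC : IsGradedSubmodule ℳ C := aux_ker_graded ℳ Q hQm
    have hD : IsGradedSubmodule ℳ D := aux_range_graded ℳ P hPm
    have hE : IsGradedSubmodule ℳ E := aux_ker_graded ℳ P hPm
    have hcomplBC : IsCompl B C := by
      have hproj : LinearMap.IsProj B Q := by
        constructor
        · intro x
          exact LinearMap.mem_range_self _ x
        · rintro x ⟨y, rfl⟩
          exact DFunLike.congr_fun hQidem y
      exact hproj.isCompl
    have hcomplDE : IsCompl D E := by
      have hproj : LinearMap.IsProj D P := by
        constructor
        · intro x
          exact LinearMap.mem_range_self _ x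
        · rintro x ⟨y, rfl⟩
          exact DFunLike.congr_fun hPidem y
      exact hproj.isCompl
    have hFBD : ∀ x ∈ B, F x ∈ D := by
      rintro x ⟨y, rfl⟩
      exact ⟨F y, rfl⟩
    have hGDB : ∀ x ∈ D, G x ∈ B := by
      rintro x ⟨y, rfl⟩
      exact ⟨G y, rfl⟩
    have hcomp1 : (F.restrict hFBD) ∘ₗ (G.restrict hGDB) = LinearMap.id := by
      ext x
      simp only [LinearMap.coe_comp, Function.comp_apply, LinearMap.restrict_coe_apply,
        LinearMap.id_coe, id_eq]
      obtain ⟨y, hy⟩ := x.2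
      rw [← hy]
      exact DFunLike.congr_fun hPidem y
    have hcomp2 : (G.restrict hGDB) ∘ₗ (F.restrict hFBD) = LinearMap.id := by
      ext x
      simp only [LinearMap.coe_comp, Function.comp_apply, LinearMap.restrict_coe_apply,
        LinearMap.id_coe, id_eq]
      obtain ⟨y, hy⟩ := x.2
      rw [← hy]
      exact DFunLike.congr_fun hQidem y
    set fBD : B ≃ₗ[R] D := LinearEquiv.ofLinear (F.restrict hFBD) (G.restrict hGDB)
      hcomp1 hcomp2 with hfBD
    have hfBDval : ∀ x : B, ((fBD x : D) : M) = F (x : M) := fun x => rfl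
    have hfBDsymmval : ∀ y : D, ((fBD.symm y : B) : M) = G (y : M) := fun y => rfl
    have hiffBD : ∀ γ : Γ, ∀ x : B, ((x : M) ∈ ℳ γ ↔ ((fBD x : D) : M) ∈ ℳ γ) := by
      intro γ x
      rw [hfBDval]
      constructor
      · intro hx
        exact f.2 γ _ hx
      · intro hx
        have h1 := g.2 γ _ hx
        obtain ⟨y, hy⟩ := x.2
        have h2 : G (F (x : M)) = (x : M) := by
          rw [← hy]
          exact DFunLike.congr_fun hQidem y
        rwa [h2] at h1
    obtain ⟨eCE, hiffCE⟩ := hcancel B C D E hB hC hD hE hcomplBC hcomplDE ⟨fBD, hiffBD⟩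
    set h : M ≃ₗ[R] M :=
      ((Submodule.prodEquivOfIsCompl B C hcomplBC).symm.trans
        ((fBD.prodCongr eCE).trans (Submodule.prodEquivOfIsCompl D E hcomplDE))) with hh
    have hb : ∀ b : B, h (b : M) = ((fBD b : D) : M) := by
      intro b
      rw [hh]
      simp only [LinearEquiv.trans_apply, Submodule.prodEquivOfIsCompl_symm_apply_left,
        LinearEquiv.prodCongr_apply]
      simp [Submodule.coe_prodEquivOfIsCompl']
    have hc : ∀ c : C, h (c : M) = ((eCE c : E) : M) := by
      intro c
      rw [hh]
      simp only [LinearEquiv.trans_apply, Submodule.prodEquivOfIsCompl_symm_apply_right,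
        LinearEquiv.prodCongr_apply]
      simp [Submodule.coe_prodEquivOfIsCompl']
    have hsymm_d : ∀ d : D, h.symm (d : M) = ((fBD.symm d : B) : M) := by
      intro d
      rw [LinearEquiv.symm_apply_eq, hb, fBD.apply_symm_apply]
    have hsymm_e : ∀ e : E, h.symm (e : M) = ((eCE.symm e : C) : M) := by
      intro e
      rw [LinearEquiv.symm_apply_eq, hc, eCE.apply_symm_apply]
    set πB := B.projectionOnto C hcomplBC with hπB
    set πC := C.projectionOnto B hcomplBC.symm with hπC
    set πD := D.projectionOnto E hcomplDE with hπD
    set πE := E.projectionOnto D hcomplDE.symm with hπE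
    have hwmem : (h : Module.End R M) ∈ gradedEndZero R ℳ := by
      intro γ m hm
      have hdecomp : ((πB m : M)) + ((πC m : M)) = m :=
        Submodule.projection_add_projection_eq_self hcomplBC m
      have hsplit : h m = h ((πB m : M)) + h ((πC m : M)) := by
        conv_lhs => rw [← hdecomp]
        rw [map_add]
      rw [LinearEquiv.coe_coe, hsplit, hb, hc]
      refine (ℳ γ).add_mem ?_ ?_
      · rw [hfBDval]
        exact f.2 γ _ (aux_proj_mem ℳ hB hC hcomplBC hm)
      · exact (hiffCE γ (πC m)).1 (aux_proj_mem ℳ hC hB hcomplBC.symm hm)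
    have humem : (h.symm : Module.End R M) ∈ gradedEndZero R ℳ := by
      intro γ m hm
      have hdecomp : ((πD m : M)) + ((πE m : M)) = m :=
        Submodule.projection_add_projection_eq_self hcomplDE m
      have hsplit : h.symm m = h.symm ((πD m : M)) + h.symm ((πE m : M)) := by
        conv_lhs => rw [← hdecomp]
        rw [map_add]
      rw [LinearEquiv.coe_coe, hsplit, hsymm_d, hsymm_e]
      refine (ℳ γ).add_mem ?_ ?_
      · rw [hfBDsymmval]
        exact g.2 γ _ (aux_proj_mem ℳ hD hE hcomplDE hm)
      · have h1 := aux_proj_mem ℳ hE hD hcomplDE.symm hm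
        have := (hiffCE γ (eCE.symm (πE m))).2
        rw [eCE.apply_symm_apply] at this
        exact this h1
    refine ⟨⟨(h.symm : Module.End R M), humem⟩, ⟨(h : Module.End R M), hwmem⟩, ?_, ?_, ?_⟩
    · apply Subtype.ext
      show (h.symm : Module.End R M) * (h : Module.End R M) = 1
      apply LinearMap.ext
      intro x
      simp
    · apply Subtype.ext
      show (h : Module.End R M) * (h.symm : Module.End R M) = 1
      apply LinearMap.ext
      intro x
      simp
    · apply Subtype.ext
      show F * (h.symm : Module.End R M) * F = F
      apply LinearMap.ext
      intro x
      have hFx : F x ∈ D := ⟨F x, DFunLike.congr_fun hFGF x⟩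
      have h1 : (h.symm : Module.End R M) (F x) = ((fBD.symm ⟨F x, hFx⟩ : B) : M) :=
        hsymm_d ⟨F x, hFx⟩
      show F ((h.symm : Module.End R M) (F x)) = F x
      rw [h1, hfBDsymmval]
      exact DFunLike.congr_fun hFGF x
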